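/- If a driver f is γ-balanced for some γ ∈ (0,1), then f is Lipschitz in z with Lipschitz constant 1/γ; that is, for every t and all F_t-measurable random variables Y_t (real-valued) and Z_t, Z'_t (ℝ^N-valued), |f(ω,t,Y_t,Z_t) − f(ω,t,Y_t,Z'_t)| ≤ (1/γ)‖Z_t − Z'_t‖_{M_{t+1}} a.s. -/

import Mathlib

open MeasureTheory Finset Filter

noncomputable section

namespace DiscreteEBSDE

variable {Ω : Type*} {mΩ : MeasurableSpace Ω} {N : ℕ}

/-- The standard basis vector `e i` of `ℝ^N`. -/
def e (N : ℕ) (i : Fin N) : Fin N → ℝ := Pi.single i 1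

/-- The Euclidean inner product on `ℝ^N`. -/
def dotR {N : ℕ} (z w : Fin N → ℝ) : ℝ := ∑ i, z i * w i

/-- The process `X` takes values in the standard basis of `ℝ^N`. -/
def BasisValued (X : ℕ → Ω → (Fin N → ℝ)) : Prop := ∀ t ω, ∃ i, X t ω = e N i

/-- The σ-algebra generated by `X 0, …, X t`. -/
def natSigma (X : ℕ → Ω → (Fin N → ℝ)) (t : ℕ) : MeasurableSpace Ω :=
  ⨆ s ∈ Set.Iic t, MeasurableSpace.comap (X s) inferInstance

/-- `F` is the `P`-completion of the natural filtration of `X`: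
a set is `F t`-measurable iff it agrees with a set of the natural σ-algebra up to a
`P`-null symmetric difference. -/
def IsCompletedNaturalFiltration (P : Measure Ω) (X : ℕ → Ω → (Fin N → ℝ))
    (F : Filtration ℕ mΩ) : Prop :=
  ∀ (t : ℕ) (A : Set Ω), MeasurableSet[F t] A ↔
    ∃ B : Set Ω, MeasurableSet[natSigma X t] B ∧ P (symmDiff A B) = 0

/-- The martingale difference `M (t+1) = X (t+1) - E[X (t+1) | F t]` (componentwise). -/
def Mdiff (P : Measure Ω) (F : Filtration ℕ mΩ) (X : ℕ → Ω → (Fin N → ℝ)) (t : ℕ)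
    (ω : Ω) : Fin N → ℝ :=
  fun i => X (t + 1) ω i - (P[(fun ω' => X (t + 1) ω' i)|F t]) ω

/-- The conditional second moment `‖Z‖²_{M_{t+1}} = E[(Zᵀ M_{t+1})² | F t]`. -/
def seminormSq (P : Measure Ω) (F : Filtration ℕ mΩ) (X : ℕ → Ω → (Fin N → ℝ))
    (t : ℕ) (Z : Ω → Fin N → ℝ) : Ω → ℝ :=
  P[(fun ω => (dotR (Z ω) (Mdiff P F X t ω)) ^ 2)|F t]

/-- The stochastic seminorm `‖Z‖_{M_{t+1}}`. -/
def mSeminorm (P : Measure Ω) (F : Filtration ℕ mΩ) (X : ℕ → Ω → (Fin N → ℝ))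
    (t : ℕ) (Z : Ω → Fin N → ℝ) (ω : Ω) : ℝ :=
  Real.sqrt (seminormSq P F X t Z ω)

/-- `Z ∼_{M_{t+1}} Z'`, i.e. `‖Z - Z'‖_{M_{t+1}} = 0` a.s. -/
def equivMt (P : Measure Ω) (F : Filtration ℕ mΩ) (X : ℕ → Ω → (Fin N → ℝ)) (t : ℕ)
    (Z Z' : Ω → Fin N → ℝ) : Prop :=
  seminormSq P F X t (fun ω => Z ω - Z' ω) =ᵐ[P] 0

/-- `Z ∼_M Z'`. -/
def equivM (P : Measure Ω) (F : Filtration ℕ mΩ) (X : ℕ → Ω → (Fin N → ℝ))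
    (Z Z' : ℕ → Ω → Fin N → ℝ) : Prop :=
  ∀ t, equivMt P F X t (Z t) (Z' t)

/-- A driver `f(ω,t,y,z)` is adapted if `(ω,y,z) ↦ f(ω,t,y,z)` is
`F t ⊗ B(ℝ) ⊗ B(ℝ^N)`-measurable for every `t`. -/
def DriverAdapted (F : Filtration ℕ mΩ) (f : Ω → ℕ → ℝ → (Fin N → ℝ) → ℝ) : Prop :=
  ∀ t : ℕ, Measurable[(F t).prod inferInstance]
    fun p : Ω × (ℝ × (Fin N → ℝ)) => f p.1 t p.2.1 p.2.2

/-- A column-stochastic transition matrix. -/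
def IsTransMat {n : ℕ} (A : Matrix (Fin n) (Fin n) ℝ) : Prop :=
  (∀ i j, 0 ≤ A i j) ∧ ∀ j, ∑ i, A i j = 1

/-- `X` is a Markov chain with transition matrices `A t`; since `X` is valued in the
standard basis this is equivalent to `E[X (t+1) | F t] = (A t) (X t)` a.s. -/
def IsMarkovChain (P : Measure Ω) (F : Filtration ℕ mΩ) (X : ℕ → Ω → (Fin N → ℝ))
    (A : ℕ → Matrix (Fin N) (Fin N) ℝ) : Prop :=
  (∀ t, IsTransMat (A t)) ∧
    ∀ (t : ℕ) (i : Fin N),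
      (P[(fun ω => X (t + 1) ω i)|F t]) =ᵐ[P] fun ω => (A t).mulVec (X t ω) i

/-- The atom of `F t` containing `ω₀` (the set of paths agreeing with `ω₀` up to time `t`). -/
def pathAtom (X : ℕ → Ω → (Fin N → ℝ)) (t : ℕ) (ω₀ : Ω) : Set Ω :=
  {ω' | ∀ s ≤ t, X s ω' = X s ω₀}

/-- `min_{i ∈ J_t^F} (z - z')ᵀ(e_i - E[X_{t+1} | F_t])` where `F` is the atom of `ω₀`
 at time `t` and `J_t^F = {i : P(X_{t+1} = e_i | F) > 0}`. -/
def minJump (P : Measure Ω) (F : Filtration ℕ mΩ) (X : ℕ → Ω → (Fin N → ℝ))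
    (t : ℕ) (ω₀ : Ω) (z z' : Fin N → ℝ) (ω : Ω) : ℝ :=
  sInf {r : ℝ | ∃ i : Fin N,
    0 < P ({ω' | X (t + 1) ω' = e N i} ∩ pathAtom X t ω₀) ∧
    r = dotR (z - z') (fun j => e N i j - (P[(fun ω'' => X (t + 1) ω'' j)|F t]) ω)}

/-- The comparison condition of the change-of-measure proposition: on every atom `F` of
`F t`, `f(ω,t,y,z) - f(ω,t,y,z') > min_{i ∈ J_t^F}{(z-z')ᵀ(e_i - E[X_{t+1}|F_t])}`, unless
this minimum is `0`, in which case equality holds. -/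
def ComparisonCondition (P : Measure Ω) (F : Filtration ℕ mΩ) (X : ℕ → Ω → (Fin N → ℝ))
    (f : Ω → ℕ → ℝ → (Fin N → ℝ) → ℝ) : Prop :=
  ∀ (t : ℕ) (y : ℝ) (z z' : Fin N → ℝ) (ω₀ : Ω), 0 < P (pathAtom X t ω₀) →
    ∀ᵐ ω ∂P, ω ∈ pathAtom X t ω₀ →
      (minJump P F X t ω₀ z z' ω = 0 → f ω t y z - f ω t y z' = 0) ∧
      (minJump P F X t ω₀ z z' ω ≠ 0 →
        minJump P F X t ω₀ z z' ω < f ω t y z - f ω t y z')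

/-- `f` is Lipschitz in `z` with constant `L`, w.r.t. the stochastic seminorm. -/
def DriverLipschitzNoY (P : Measure Ω) (F : Filtration ℕ mΩ) (X : ℕ → Ω → (Fin N → ℝ))
    (L : ℝ) (f : Ω → ℕ → (Fin N → ℝ) → ℝ) : Prop :=
  ∀ (t : ℕ) (Zt Z't : Ω → Fin N → ℝ),
    StronglyMeasurable[F t] Zt → StronglyMeasurable[F t] Z't →
    ∀ᵐ ω ∂P, |f ω t (Zt ω) - f ω t (Z't ω)| ≤
      L * mSeminorm P F X t (fun ω' => Zt ω' - Z't ω') ω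

/-- `(Y,Z)` is an adapted solution of the finite horizon BSDE with driver `f`,
horizon `T` and terminal condition `ξ`. -/
def SolvesFiniteBSDE (P : Measure Ω) (F : Filtration ℕ mΩ) (X : ℕ → Ω → (Fin N → ℝ))
    (f : Ω → ℕ → ℝ → (Fin N → ℝ) → ℝ) (T : ℕ) (ξ : Ω → ℝ)
    (Y : ℕ → Ω → ℝ) (Z : ℕ → Ω → Fin N → ℝ) : Prop :=
  Adapted F Y ∧ Adapted F Z ∧
    ∀ t ≤ T, ∀ᵐ ω ∂P,
      Y t ω - ∑ u ∈ Finset.Ico t T, f ω u (Y u ω) (Z u ω) +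
        ∑ u ∈ Finset.Ico t T, dotR (Z u ω) (Mdiff P F X u ω) = ξ ω

/-- `(Y,Z)` is an adapted solution of the infinite-horizon discounted BSDE
with discount rate `α` and driver `f` (independent of `y`). -/
def SolvesDiscountedBSDE (P : Measure Ω) (F : Filtration ℕ mΩ) (X : ℕ → Ω → (Fin N → ℝ))
    (α : ℝ) (f : Ω → ℕ → (Fin N → ℝ) → ℝ)
    (Y : ℕ → Ω → ℝ) (Z : ℕ → Ω → Fin N → ℝ) : Prop :=
  Adapted F Y ∧ Adapted F Z ∧
    ∀ t T : ℕ, t < T → ∀ᵐ ω ∂P,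
      Y T ω = Y t ω - ∑ u ∈ Finset.Ico t T, (f ω u (Z u ω) - α * Y u ω) +
        ∑ u ∈ Finset.Ico t T, dotR (Z u ω) (Mdiff P F X u ω)

/-- `(Y,Z,lam)` solves the Ergodic BSDE with Markovian driver `f`. -/
def SolvesEBSDE (P : Measure Ω) (F : Filtration ℕ mΩ) (X : ℕ → Ω → (Fin N → ℝ))
    (f : (Fin N → ℝ) → (Fin N → ℝ) → ℝ) (Y : ℕ → Ω → ℝ) (Z : ℕ → Ω → Fin N → ℝ)
    (lam : ℝ) : Prop :=
  ∀ t T : ℕ, t < T → ∀ᵐ ω ∂P,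
    Y T ω = Y t ω - ∑ u ∈ Finset.Ico t T, (f (X u ω) (Z u ω) - lam) +
      ∑ u ∈ Finset.Ico t T, dotR (Z u ω) (Mdiff P F X u ω)

/-- Ratio with the convention `0/0 := 1`. -/
def balRatio (a b : ℝ) : ℝ := if a = 0 ∧ b = 0 then 1 else a / b

/-- The driver `f(ω,t,y,z)` is `γ`-balanced. -/
def IsGammaBalanced (P : Measure Ω) (F : Filtration ℕ mΩ) (X : ℕ → Ω → (Fin N → ℝ))
    (A : ℕ → Matrix (Fin N) (Fin N) ℝ) (γ : ℝ)
    (f : Ω → ℕ → ℝ → (Fin N → ℝ) → ℝ) : Prop :=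
  ∃ ψ : Ω → ℕ → (Fin N → ℝ) → (Fin N → ℝ) → (Fin N → ℝ),
    (∀ t : ℕ, Measurable[(F t).prod inferInstance]
      fun p : Ω × ((Fin N → ℝ) × (Fin N → ℝ)) => ψ p.1 t p.2.1 p.2.2) ∧
    ∀ (t : ℕ) (y : ℝ) (z z' : Fin N → ℝ), ∀ᵐ ω ∂P,
      f ω t y z - f ω t y z' =
          dotR (z - z') (fun i => ψ ω t z z' i - (A t).mulVec (X t ω) i) ∧
        (∀ i, balRatio (ψ ω t z z' i) ((A t).mulVec (X t ω) i) ∈ Set.Icc γ γ⁻¹) ∧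
        ∑ i, ψ ω t z z' i = 1

/-- The driver `f(ω,t,z)` (independent of `y`) is `γ`-balanced. -/
def IsGammaBalancedNoY (P : Measure Ω) (F : Filtration ℕ mΩ) (X : ℕ → Ω → (Fin N → ℝ))
    (A : ℕ → Matrix (Fin N) (Fin N) ℝ) (γ : ℝ)
    (f : Ω → ℕ → (Fin N → ℝ) → ℝ) : Prop :=
  ∃ ψ : Ω → ℕ → (Fin N → ℝ) → (Fin N → ℝ) → (Fin N → ℝ),
    (∀ t : ℕ, Measurable[(F t).prod inferInstance]
      fun p : Ω × ((Fin N → ℝ) × (Fin N → ℝ)) => ψ p.1 t p.2.1 p.2.2) ∧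
    ∀ (t : ℕ) (z z' : Fin N → ℝ), ∀ᵐ ω ∂P,
      f ω t z - f ω t z' =
          dotR (z - z') (fun i => ψ ω t z z' i - (A t).mulVec (X t ω) i) ∧
        (∀ i, balRatio (ψ ω t z z' i) ((A t).mulVec (X t ω) i) ∈ Set.Icc γ γ⁻¹) ∧
        ∑ i, ψ ω t z z' i = 1

/-- A probability vector on `Fin n`. -/
def IsProbVec {n : ℕ} (μ : Fin n → ℝ) : Prop := (∀ i, 0 ≤ μ i) ∧ ∑ i, μ i = 1

/-- Total variation distance between (signed) measures on a finite state space. -/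
def tvDist {n : ℕ} (μ ν : Fin n → ℝ) : ℝ := (∑ x, |μ x - ν x|) / 2

/-- Uniform ergodicity of the chain induced by the column-stochastic matrix `A`. -/
def UniformlyErgodic {n : ℕ} (A : Matrix (Fin n) (Fin n) ℝ) : Prop :=
  ∃ π : Fin n → ℝ, IsProbVec π ∧ ∃ R ρ : ℝ, 0 < R ∧ 0 < ρ ∧
    ∀ (t : ℕ) (μ : Fin n → ℝ), IsProbVec μ →
      tvDist ((A ^ t).mulVec μ) π ≤ R * Real.exp (-ρ * t)

/-!
Up to null sets, `F t` is generated by the finitely many possible paths of `X` up to time `t`,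
so `Y_t`, `Z_t`, `Z'_t` are a.s. constant on each path and the balancing identity may be used
with deterministic arguments. Given `F t`, `X (t+1)` has law `p = A_t X_t`, so `‖W‖²_{M_{t+1}}` is
the variance of the entries of `W` under `p`. The ratio bounds give `|ψ_i - p_i| ≤ (γ⁻¹ - 1) p_i`,
and after centring `w` at its `p`-mean, Cauchy–Schwarz yields
`|wᵀ(ψ - p)| ≤ (γ⁻¹ - 1) √Var_p(w) ≤ γ⁻¹ √Var_p(w)`.
-/
lemma abs_sub_le_of_balRatio_mem_Icc {γ a b : ℝ} (hγ : 0 < γ) (hb : 0 ≤ b)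
    (h : balRatio a b ∈ Set.Icc γ γ⁻¹) : |a - b| ≤ (γ⁻¹ - 1) * b := by
  rcases hb.eq_or_lt with rfl | hb
  · by_cases ha : a = 0
    · simp [ha]
    -- `a / 0 = 0 < γ`, so a vanishing denominator forces a vanishing numerator
    · simp only [balRatio, ha, false_and, if_false, div_zero, Set.mem_Icc] at h
      linarith [h.1]
  · rw [balRatio, if_neg fun h => hb.ne' h.2, Set.mem_Icc, le_div_iff₀ hb, div_le_iff₀ hb] at h
    have hγ2 : 0 ≤ γ⁻¹ + γ - 2 := by
      rw [show γ⁻¹ + γ - 2 = (γ - 1) ^ 2 * γ⁻¹ by field_simp; ring]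
      positivity
    rw [abs_le]
    constructor <;> nlinarith

lemma sum_sq_mul_sub_sq_sum_mul_eq {n : ℕ} {p : Fin n → ℝ} (hp : ∑ i, p i = 1)
    (w : Fin n → ℝ) :
    ∑ i, w i ^ 2 * p i - (∑ i, w i * p i) ^ 2 = ∑ i, (w i - ∑ j, w j * p j) ^ 2 * p i := by
  set c := ∑ j, w j * p j
  have hexpand : ∀ i, (w i - c) ^ 2 * p i = w i ^ 2 * p i - 2 * c * (w i * p i) + c ^ 2 * p i :=
    fun i => by ring
  rw [Finset.sum_congr rfl fun i _ => hexpand i, Finset.sum_add_distrib, Finset.sum_sub_distrib,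
    ← Finset.mul_sum, ← Finset.mul_sum, hp]
  ring

lemma abs_sum_mul_sub_le {n : ℕ} {p ψ : Fin n → ℝ} {κ : ℝ} (hp : IsProbVec p)
    (hψ : ∑ i, ψ i = 1) (hκ : 0 ≤ κ) (hψp : ∀ i, |ψ i - p i| ≤ κ * p i) (w : Fin n → ℝ) :
    |∑ i, w i * (ψ i - p i)| ≤ κ * √(∑ i, w i ^ 2 * p i - (∑ i, w i * p i) ^ 2) := by
  set c := ∑ i, w i * p i
  have hcentre : ∑ i, w i * (ψ i - p i) = ∑ i, (w i - c) * (ψ i - p i) := by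
    have h0 : ∑ i, (ψ i - p i) = 0 := by rw [Finset.sum_sub_distrib, hψ, hp.2, sub_self]
    simp only [sub_mul (w _), Finset.sum_sub_distrib, ← Finset.mul_sum, h0, mul_zero, sub_zero]
  have hjensen : (∑ i, |w i - c| * p i) ^ 2 ≤ ∑ i, (w i - c) ^ 2 * p i := by
    have := sum_sq_le_sum_mul_sum_of_sq_le_mul Finset.univ (r := fun i => |w i - c| * p i)
      (fun i _ => hp.1 i) (fun i _ => mul_nonneg (sq_nonneg (w i - c)) (hp.1 i))
      (fun i _ => le_of_eq (by rw [mul_pow, sq_abs]; ring))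
    rwa [hp.2, one_mul] at this
  calc |∑ i, w i * (ψ i - p i)|
      ≤ ∑ i, |w i - c| * (κ * p i) := by
        rw [hcentre]
        refine (Finset.abs_sum_le_sum_abs _ _).trans (Finset.sum_le_sum fun i _ => ?_)
        rw [abs_mul]
        exact mul_le_mul_of_nonneg_left (hψp i) (abs_nonneg _)
    _ = κ * ∑ i, |w i - c| * p i := by
        rw [Finset.mul_sum]
        exact Finset.sum_congr rfl fun i _ => by ring
    _ ≤ κ * √(∑ i, (w i - c) ^ 2 * p i) :=
        mul_le_mul_of_nonneg_left ((Real.le_sqrt (Finset.sum_nonneg fun i _ =>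
          mul_nonneg (abs_nonneg _) (hp.1 i)) (Finset.sum_nonneg fun i _ =>
          mul_nonneg (sq_nonneg _) (hp.1 i))).2 hjensen) hκ
    _ = κ * √(∑ i, w i ^ 2 * p i - (∑ i, w i * p i) ^ 2) := by
        rw [sum_sq_mul_sub_sq_sum_mul_eq hp.2]

lemma dotR_e (z : Fin N → ℝ) (k : Fin N) : dotR z (e N k) = z k := by
  simp [dotR, e, Pi.single_apply]

lemma e_injective : Function.Injective (e N) := fun i j h => by
  simpa [e, Pi.single_apply] using congrFun h i

lemma isProbVec_e (k : Fin N) : IsProbVec (e N k) :=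
  ⟨fun i => by by_cases h : i = k <;> simp [e, h], by simp [e]⟩

lemma IsTransMat.isProbVec_mulVec {n : ℕ} {A : Matrix (Fin n) (Fin n) ℝ} (hA : IsTransMat A)
    {μ : Fin n → ℝ} (hμ : IsProbVec μ) : IsProbVec (A.mulVec μ) := by
  simp only [IsProbVec, Matrix.mulVec, dotProduct]
  refine ⟨fun i => Finset.sum_nonneg fun j _ => mul_nonneg (hA.1 i j) (hμ.1 j), ?_⟩
  rw [Finset.sum_comm]
  simp [← Finset.sum_mul, hA.2, hμ.2]

lemma IsProbVec.abs_le_one {n : ℕ} {μ : Fin n → ℝ} (hμ : IsProbVec μ) (i : Fin n) :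
    |μ i| ≤ 1 := by
  rw [abs_of_nonneg (hμ.1 i), ← hμ.2]
  exact Finset.single_le_sum (fun j _ => hμ.1 j) (Finset.mem_univ i)

lemma measurable_natSigma {X : ℕ → Ω → Fin N → ℝ} {s t : ℕ} (hst : s ≤ t) :
    Measurable[natSigma X t] (X s) :=
  measurable_iff_comap_le.2 <| le_iSup₂ (f := fun s (_ : s ∈ Set.Iic t) =>
    MeasurableSpace.comap (X s) inferInstance) s hst

lemma IsCompletedNaturalFiltration.natSigma_le {P : Measure Ω} {X : ℕ → Ω → Fin N → ℝ}
    {F : Filtration ℕ mΩ} (hF : IsCompletedNaturalFiltration P X F) (t : ℕ) :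
    natSigma X t ≤ F t :=
  fun B hB => (hF t B).2 ⟨B, hB, by simp⟩

lemma IsCompletedNaturalFiltration.measurable {P : Measure Ω} {X : ℕ → Ω → Fin N → ℝ}
    {F : Filtration ℕ mΩ} (hF : IsCompletedNaturalFiltration P X F) (t : ℕ) :
    Measurable (X t) :=
  (measurable_natSigma le_rfl).mono ((hF.natSigma_le t).trans (F.le t)) le_rfl

lemma dotR_Mdiff_ae_eq {P : Measure Ω} {F : Filtration ℕ mΩ} {X : ℕ → Ω → Fin N → ℝ}
    {A : ℕ → Matrix (Fin N) (Fin N) ℝ} (hA : IsMarkovChain P F X A) (t : ℕ)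
    (W : Ω → Fin N → ℝ) :
    (fun ω => dotR (W ω) (Mdiff P F X t ω)) =ᵐ[P]
      fun ω => dotR (W ω) (X (t + 1) ω) - dotR (W ω) ((A t).mulVec (X t ω)) := by
  filter_upwards [ae_all_iff.2 (hA.2 t)] with ω hω
  simp only [dotR, Mdiff, hω, mul_sub, Finset.sum_sub_distrib]

lemma condExp_dotR_X_succ {P : Measure Ω} [IsFiniteMeasure P] {F : Filtration ℕ mΩ}
    {X : ℕ → Ω → Fin N → ℝ} (hX : BasisValued X) (hF : IsCompletedNaturalFiltration P X F)
    {A : ℕ → Matrix (Fin N) (Fin N) ℝ} (hA : IsMarkovChain P F X A) {t : ℕ}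
    {W : Ω → Fin N → ℝ} (hW : StronglyMeasurable[F t] W) {C : ℝ} (hWC : ∀ ω, ‖W ω‖ ≤ C) :
    P[fun ω => dotR (W ω) (X (t + 1) ω)|F t] =ᵐ[P]
      fun ω => dotR (W ω) ((A t).mulVec (X t ω)) := by
  have hWi (i : Fin N) : StronglyMeasurable[F t] fun ω => W ω i :=
    (continuous_apply i).comp_stronglyMeasurable hW
  have hXi (i : Fin N) : Integrable (fun ω => X (t + 1) ω i) P := by
    refine .of_bound ((measurable_pi_apply i).comp (hF.measurable _)).aestronglyMeasurable 1
      (ae_of_all _ fun ω => ?_)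
    obtain ⟨k, hk⟩ := hX (t + 1) ω
    simpa [hk] using (isProbVec_e k).abs_le_one i
  have hWXi (i : Fin N) : Integrable ((fun ω => W ω i) * fun ω => X (t + 1) ω i) P :=
    (hXi i).bdd_mul ((hWi i).mono (F.le t)).aestronglyMeasurable
      (ae_of_all _ fun ω => (norm_le_pi_norm (W ω) i).trans (hWC ω))
  have hsum : (fun ω => dotR (W ω) (X (t + 1) ω)) =
      ∑ i, (fun ω => W ω i) * fun ω => X (t + 1) ω i := by
    ext ω
    simp [dotR, Finset.sum_apply]
  rw [hsum]
  refine (condExp_finsetSum (fun i _ => hWXi i) _).trans ?_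
  have hterm (i : Fin N) := condExp_mul_of_stronglyMeasurable_left (hWi i) (hWXi i) (hXi i)
  filter_upwards [ae_all_iff.2 hterm, ae_all_iff.2 (hA.2 t)] with ω h1 h2
  simp [Finset.sum_apply, h1, h2, dotR]

lemma seminormSq_congr_ae {P : Measure Ω} {F : Filtration ℕ mΩ} {X : ℕ → Ω → Fin N → ℝ}
    {t : ℕ} {Z Z' : Ω → Fin N → ℝ} (h : Z =ᵐ[P] Z') :
    seminormSq P F X t Z =ᵐ[P] seminormSq P F X t Z' :=
  condExp_congr_ae (h.mono fun ω hω => by simp only [hω])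

open ProbabilityTheory in
lemma seminormSq_ae_eq_variance {P : Measure Ω} [IsFiniteMeasure P] {F : Filtration ℕ mΩ}
    {X : ℕ → Ω → Fin N → ℝ} (hX : BasisValued X) (hF : IsCompletedNaturalFiltration P X F)
    {A : ℕ → Matrix (Fin N) (Fin N) ℝ} (hA : IsMarkovChain P F X A) {t : ℕ}
    {W : Ω → Fin N → ℝ} (hW : StronglyMeasurable[F t] W) {C : ℝ} (hWC : ∀ ω, ‖W ω‖ ≤ C) :
    seminormSq P F X t W =ᵐ[P] fun ω =>
      dotR (W ω ^ 2) ((A t).mulVec (X t ω)) - dotR (W ω) ((A t).mulVec (X t ω)) ^ 2 := by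
  set u : Ω → ℝ := fun ω => dotR (W ω) (X (t + 1) ω)
  have hu : P[u|F t] =ᵐ[P] fun ω => dotR (W ω) ((A t).mulVec (X t ω)) :=
    condExp_dotR_X_succ hX hF hA hW hWC
  have hu_sq : u ^ 2 = fun ω => dotR (W ω ^ 2) (X (t + 1) ω) := by
    ext ω
    obtain ⟨k, hk⟩ := hX (t + 1) ω
    simp [u, hk, dotR_e]
  have hu2 : P[u ^ 2|F t] =ᵐ[P] fun ω => dotR (W ω ^ 2) ((A t).mulVec (X t ω)) := by
    rw [hu_sq]
    refine condExp_dotR_X_succ hX hF hA (hW.pow 2) (C := C ^ 2) fun ω => ?_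
    exact (norm_pow_le' _ two_pos).trans (pow_le_pow_left₀ (norm_nonneg _) (hWC ω) 2)
  have hu_memLp : MemLp u 2 P := by
    refine .of_bound ?_ C (ae_of_all _ fun ω => ?_)
    · have hWm : Measurable W := (hW.mono (F.le t)).measurable
      have hXm := hF.measurable (t + 1)
      simp only [u, dotR]
      fun_prop
    · obtain ⟨k, hk⟩ := hX (t + 1) ω
      simpa [u, hk, dotR_e] using (norm_le_pi_norm (W ω) k).trans (hWC ω)
  calc seminormSq P F X t W
      =ᵐ[P] Var[u; P | F t] := by
        refine condExp_congr_ae ?_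
        filter_upwards [dotR_Mdiff_ae_eq hA t W, hu] with ω h1 h2
        simp [h1, h2, u]
    _ =ᵐ[P] P[u ^ 2|F t] - P[u|F t] ^ 2 := condVar_ae_eq_condExp_sq_sub_sq_condExp (F.le t) hu_memLp
    _ =ᵐ[P] _ := by
        filter_upwards [hu, hu2] with ω h1 h2
        simp [h1, h2]

theorem exists_ae_eq_comp_of_forall_ae_eq_preimage {ι β : Type*} [Countable ι] [Nonempty β]
    [MeasurableSpace β] [MeasurableSpace.CountablySeparated β] {m : MeasurableSpace Ω}
    {μ : Measure[mΩ] Ω} {κ : Ω → ι} (hκ : ∀ c, MeasurableSet[mΩ] (κ ⁻¹' {c}))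
    (h : ∀ D, MeasurableSet[m] D → ∃ S, D =ᵐ[μ] κ ⁻¹' S) {V : Ω → β}
    (hV : Measurable[m] V) : ∃ g : ι → β, V =ᵐ[μ] g ∘ κ := by
  have hconst (c : ι) : ∃ b, V =ᵐ[μ.restrict (κ ⁻¹' {c})] fun _ => b := by
    refine Filter.exists_eventuallyEq_const_of_forall_separating MeasurableSet fun U hU => ?_
    obtain ⟨S, hS⟩ := h _ (hV hU)
    have hS' := ae_restrict_of_ae (s := κ ⁻¹' {c}) hS
    have hc : ∀ᵐ ω ∂μ.restrict (κ ⁻¹' {c}), κ ω = c := ae_restrict_mem (hκ c)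
    by_cases hcS : c ∈ S
    · left
      filter_upwards [hS', hc] with ω hω hωc
      exact (Eq.to_iff hω).2 (show κ ω ∈ S from hωc ▸ hcS)
    · right
      filter_upwards [hS', hc] with ω hω hωc
      exact fun hωU => hcS (hωc ▸ ((Eq.to_iff hω).1 hωU : κ ω ∈ S))
  choose g hg using hconst
  refine ⟨g, ?_⟩
  have hcover : (⋃ c, κ ⁻¹' {c}) = Set.univ := by ext; simp
  rw [← Measure.restrict_univ (μ := μ), ← hcover, EventuallyEq, ae_restrict_iUnion_iff]
  intro c
  filter_upwards [hg c, ae_restrict_mem (hκ c)] with ω hω hωc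
  simp_all

def pathIndex {X : ℕ → Ω → Fin N → ℝ} (hX : BasisValued X) (t : ℕ) (ω : Ω) :
    Fin (t + 1) → Fin N :=
  fun s => (hX s ω).choose

lemma X_eq_e_pathIndex {X : ℕ → Ω → Fin N → ℝ} (hX : BasisValued X) (t : ℕ) (ω : Ω)
    (s : Fin (t + 1)) : X s ω = e N (pathIndex hX t ω s) :=
  (hX s ω).choose_spec

lemma measurable_pathIndex {X : ℕ → Ω → Fin N → ℝ} (hX : BasisValued X) (t : ℕ) :
    Measurable[natSigma X t] (pathIndex hX t) := by
  refine @measurable_to_countable' _ Ω _ _ (natSigma X t) _ fun c => ?_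
  have : pathIndex hX t ⁻¹' {c} = ⋂ s : Fin (t + 1), X s ⁻¹' {e N (c s)} := by
    ext ω
    simp [funext_iff, X_eq_e_pathIndex hX t ω, e_injective.eq_iff]
  rw [this]
  exact .iInter fun s => measurable_natSigma (Nat.lt_succ_iff.1 s.2) (measurableSet_singleton _)

lemma natSigma_le_comap_pathIndex {X : ℕ → Ω → Fin N → ℝ} (hX : BasisValued X) (t : ℕ) :
    natSigma X t ≤ MeasurableSpace.comap (pathIndex hX t) ⊤ := by
  refine iSup₂_le fun s hs => ?_
  have : X s = (fun c => e N (c ⟨s, Nat.lt_succ_of_le hs⟩)) ∘ pathIndex hX t :=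
    funext fun ω => X_eq_e_pathIndex hX t ω ⟨s, _⟩
  rw [this, ← MeasurableSpace.comap_comp]
  exact MeasurableSpace.comap_mono le_top

lemma IsCompletedNaturalFiltration.exists_ae_eq_comp_pathIndex {P : Measure Ω}
    {X : ℕ → Ω → Fin N → ℝ} {F : Filtration ℕ mΩ} (hF : IsCompletedNaturalFiltration P X F)
    (hX : BasisValued X) {t : ℕ} {β : Type*} [Nonempty β] [MeasurableSpace β]
    [MeasurableSpace.CountablySeparated β] {V : Ω → β} (hV : Measurable[F t] V) :
    ∃ g, V =ᵐ[P] g ∘ pathIndex hX t := by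
  refine exists_ae_eq_comp_of_forall_ae_eq_preimage (fun c => ?_) (fun D hD => ?_) hV
  · exact (measurable_pathIndex hX t).mono ((hF.natSigma_le t).trans (F.le t)) le_rfl
      (measurableSet_singleton c)
  · obtain ⟨B, hB, hDB⟩ := (hF t D).1 hD
    obtain ⟨S, -, rfl⟩ := natSigma_le_comap_pathIndex hX t B hB
    exact ⟨S, measure_symmDiff_eq_zero_iff.1 hDB⟩

theorem gammaBalanced_lipschitz_general
    {Ω : Type*} {mΩ : MeasurableSpace Ω} {N : ℕ}
    (P : Measure Ω) [IsProbabilityMeasure P] (F : Filtration ℕ mΩ)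
    (X : ℕ → Ω → (Fin N → ℝ)) (hX : BasisValued X)
    (hF : IsCompletedNaturalFiltration P X F)
    (A : ℕ → Matrix (Fin N) (Fin N) ℝ) (hA : IsMarkovChain P F X A)
    (γ : ℝ) (hγ : γ ∈ Set.Ioo (0 : ℝ) 1)
    (f : Ω → ℕ → ℝ → (Fin N → ℝ) → ℝ)
    (hf : IsGammaBalanced P F X A γ f) :
    ∀ (t : ℕ) (Yt : Ω → ℝ) (Zt Z't : Ω → Fin N → ℝ),
      StronglyMeasurable[F t] Yt → StronglyMeasurable[F t] Zt →
      StronglyMeasurable[F t] Z't →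
      ∀ᵐ ω ∂P, |f ω t (Yt ω) (Zt ω) - f ω t (Yt ω) (Z't ω)| ≤
        γ⁻¹ * mSeminorm P F X t (fun ω' => Zt ω' - Z't ω') ω := by
  intro t Yt Zt Z't hY hZ hZ'
  obtain ⟨ψ, -, hψ⟩ := hf
  set κ := pathIndex hX t
  obtain ⟨y, hy⟩ := hF.exists_ae_eq_comp_pathIndex hX hY.measurable
  obtain ⟨z, hz⟩ := hF.exists_ae_eq_comp_pathIndex hX hZ.measurable
  obtain ⟨z', hz'⟩ := hF.exists_ae_eq_comp_pathIndex hX hZ'.measurable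
  obtain ⟨C, hC⟩ := Finite.exists_le fun c => ‖z c - z' c‖
  have hW : StronglyMeasurable[F t] ((z - z') ∘ κ) :=
    ((measurable_of_countable _).comp ((measurable_pathIndex hX t).mono
      (hF.natSigma_le t) le_rfl)).stronglyMeasurable
  have hsemi : seminormSq P F X t (fun ω' => Zt ω' - Z't ω') =ᵐ[P] fun ω =>
      dotR ((z - z') (κ ω) ^ 2) ((A t).mulVec (X t ω)) -
        dotR ((z - z') (κ ω)) ((A t).mulVec (X t ω)) ^ 2 :=
    (seminormSq_congr_ae (hz.sub hz')).trans
      (seminormSq_ae_eq_variance hX hF hA hW fun ω => hC (κ ω))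
  filter_upwards [hy, hz, hz', hsemi, ae_all_iff.2 fun c => hψ t (y c) (z c) (z' c)]
    with ω hyω hzω hz'ω hsemiω hψω
  obtain ⟨hdiff, hratio, hψ1⟩ := hψω (κ ω)
  obtain ⟨k, hk⟩ := hX t ω
  have hp : IsProbVec ((A t).mulVec (X t ω)) := hk ▸ (hA.1 t).isProbVec_mulVec (isProbVec_e k)
  rw [hyω, hzω, hz'ω, Function.comp_apply, Function.comp_apply, Function.comp_apply, hdiff,
    mSeminorm, hsemiω]
  refine (abs_sum_mul_sub_le hp hψ1 (by linarith [(one_lt_inv₀ hγ.1).2 hγ.2])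
    (fun i => abs_sub_le_of_balRatio_mem_Icc hγ.1 (hp.1 i) (hratio i)) _).trans ?_
  exact mul_le_mul_of_nonneg_right (by linarith) (Real.sqrt_nonneg _)

/-- A `γ`-balanced driver is Lipschitz in `z` with Lipschitz constant `1/γ`. -/
theorem gammaBalanced_lipschitz
    {Ω : Type*} {mΩ : MeasurableSpace Ω} {N : ℕ}
    (P : Measure Ω) [IsProbabilityMeasure P] (F : Filtration ℕ mΩ)
    (X : ℕ → Ω → (Fin N → ℝ)) (hX : BasisValued X)
    (hF : IsCompletedNaturalFiltration P X F)
    (A : ℕ → Matrix (Fin N) (Fin N) ℝ) (hA : IsMarkovChain P F X A)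
    (γ : ℝ) (hγ : γ ∈ Set.Ioo (0 : ℝ) 1)
    (f : Ω → ℕ → ℝ → (Fin N → ℝ) → ℝ) (hfAd : DriverAdapted F f)
    (hf : IsGammaBalanced P F X A γ f) :
    ∀ (t : ℕ) (Yt : Ω → ℝ) (Zt Z't : Ω → Fin N → ℝ),
      StronglyMeasurable[F t] Yt → StronglyMeasurable[F t] Zt →
      StronglyMeasurable[F t] Z't →
      ∀ᵐ ω ∂P, |f ω t (Yt ω) (Zt ω) - f ω t (Yt ω) (Z't ω)| ≤
        γ⁻¹ * mSeminorm P F X t (fun ω' => Zt ω' - Z't ω') ω :=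
  gammaBalanced_lipschitz_general P F X hX hF A hA γ hγ f hf
end DiscreteEBSDE
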